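/- Let X be an arbitrary set and h_1, ..., h_r : X → ℝ be arbitrarily fixed functions. Then B(h_1, ..., h_r; X) = T(X) if and only if X contains no cycle with respect to the functions h_1, ..., h_r. -/

import Mathlib

/-!
A cycle is the same thing as a nonzero finitely supported function `μ` on `X` whose marginals
`μ.mapDomain hᵢ` all vanish, i.e. a nonzero element of the kernel of the linear map
`marginals : (X →₀ ℝ) → (Fin r → ℝ →₀ ℝ)`. A function `f` lies in `B(h₁, …, h_r; X)` exactly when
the functional `μ ↦ ∑ₓ μ x f x` factors through `marginals`, so `B = T` says that the dual map of
`marginals` is surjective, which over a field means that `marginals` is injective.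
-/

open Finset Function

theorem Finsupp.mapDomain_equivFunOnFinite_symm_apply {α β M : Type*} [AddCommMonoid M]
    [Fintype α] [DecidableEq β] (f : α → β) (v : α → M) (b : β) :
    (equivFunOnFinite.symm v).mapDomain f b = ∑ a with f a = b, v a := by
  classical
  simp [mapDomain, sum_fintype, single_apply, Finset.sum_filter]

theorem exists_fin_cycle_iff_exists_finsupp {ι X Y M : Type*} [AddCommMonoid M] [DecidableEq Y]
    (h : ι → X → Y) :
    (∃ (n : ℕ) (x : Fin n → X) (lam : Fin n → M), 0 < n ∧ Injective x ∧ (∀ j, lam j ≠ 0) ∧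
      ∀ i t, ∑ j with h i (x j) = t, lam j = 0) ↔
    ∃ μ : X →₀ M, μ ≠ 0 ∧ ∀ i, μ.mapDomain (h i) = 0 := by
  constructor
  · rintro ⟨n, x, lam, hn, hx, hlam, hsum⟩
    refine ⟨(Finsupp.equivFunOnFinite.symm lam).mapDomain x, fun hμ => ?_, fun i => ?_⟩
    · apply hlam ⟨0, hn⟩
      simpa [Finsupp.mapDomain_apply hx] using DFunLike.congr_fun hμ (x ⟨0, hn⟩)
    · ext t
      rw [← Finsupp.mapDomain_comp, Finsupp.mapDomain_equivFunOnFinite_symm_apply]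
      exact hsum i t
  · rintro ⟨μ, hμ, hmarg⟩
    set x : Fin μ.support.card → X := fun j => μ.support.equivFin.symm j
    have hx : Injective x := Subtype.val_injective.comp μ.support.equivFin.symm.injective
    have hμx : μ = (Finsupp.equivFunOnFinite.symm (μ ∘ x)).mapDomain x := by
      ext a
      by_cases ha : a ∈ μ.support
      · obtain ⟨j, rfl⟩ : ∃ j, x j = a := ⟨μ.support.equivFin ⟨a, ha⟩, by simp [x]⟩
        simp [Finsupp.mapDomain_apply hx]
      · rw [Finsupp.notMem_support_iff.mp ha, Finsupp.mapDomain_of_notMem_range]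
        rintro ⟨j, rfl⟩
        exact ha (μ.support.equivFin.symm j).2
    refine ⟨μ.support.card, x, μ ∘ x, ?_, hx, fun j => ?_, fun i t => ?_⟩
    · rwa [Finset.card_pos, Finsupp.support_nonempty_iff]
    · exact Finsupp.mem_support_iff.mp (μ.support.equivFin.symm j).2
    · have := DFunLike.congr_fun (hmarg i) t
      rwa [hμx, ← Finsupp.mapDomain_comp, Finsupp.mapDomain_equivFunOnFinite_symm_apply] at this

section Marginals

variable (K : Type*) {ι X Y : Type*} [Field K] (h : ι → X → Y)

noncomputable def marginals : (X →₀ K) →ₗ[K] (ι → Y →₀ K) :=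
  LinearMap.pi fun i => Finsupp.lmapDomain K K (h i)

variable {K h}

@[simp]
theorem marginals_apply (μ : X →₀ K) (i : ι) : marginals K h μ i = μ.mapDomain (h i) := rfl

theorem marginals_single (x : X) (c : K) :
    marginals K h (Finsupp.single x c) = fun i => Finsupp.single (h i x) c := by
  ext i : 1
  simp

variable [Fintype ι]

theorem exists_sum_comp_iff_mem_range_dualMap (f : X → K) :
    (∃ g : ι → Y → K, ∀ x, f x = ∑ i, g i (h i x)) ↔
      Finsupp.linearCombination K f ∈ LinearMap.range (marginals K h).dualMap := by
  constructor
  · rintro ⟨g, hg⟩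
    refine ⟨∑ i, (Finsupp.linearCombination K (g i)).comp (LinearMap.proj i), ?_⟩
    refine Finsupp.lhom_ext fun x c => ?_
    simp [LinearMap.dualMap_apply', marginals_single, hg, Finset.mul_sum]
  · rintro ⟨ψ, hψ⟩
    classical
    refine ⟨fun i t => ψ (Pi.single i (Finsupp.single t 1)), fun x => ?_⟩
    calc f x = (marginals K h).dualMap ψ (Finsupp.single x 1) := by simp [hψ]
      _ = ∑ i, ψ (Pi.single i (Finsupp.single (h i x) 1)) := by
        rw [LinearMap.dualMap_apply', LinearMap.comp_apply, marginals_single, ← map_sum,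
          Finset.univ_sum_single]

theorem forall_exists_sum_comp_iff_injective_marginals :
    (∀ f : X → K, ∃ g : ι → Y → K, ∀ x, f x = ∑ i, g i (h i x)) ↔ Injective (marginals K h) := by
  simp_rw [exists_sum_comp_iff_mem_range_dualMap, ← LinearMap.dualMap_surjective_iff]
  refine ⟨fun H φ => ?_, fun H f => H _⟩
  have hφ : Finsupp.linearCombination K (fun x => φ (Finsupp.single x 1)) = φ :=
    Finsupp.lhom_ext fun x c => by
      rw [Finsupp.linearCombination_single, ← map_smul, Finsupp.smul_single_one]
  exact hφ ▸ H _

end Marginals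

/-- `B(h₁,...,h_r; X) = T(X)`, i.e. every function `f : X → ℝ` can be written
as `∑ᵢ gᵢ ∘ hᵢ`, if and only if `X` contains no cycle with respect to the
functions `h₁,...,h_r`. -/
theorem stmt1 {X : Type*} {r : ℕ} (h : Fin r → X → ℝ) :
    (∀ f : X → ℝ, ∃ g : Fin r → ℝ → ℝ, ∀ x : X, f x = ∑ i, g i (h i x)) ↔
    ¬ ∃ (n : ℕ) (x : Fin n → X) (lam : Fin n → ℝ),
        0 < n ∧ Function.Injective x ∧ (∀ j, lam j ≠ 0) ∧
        ∀ (i : Fin r) (t : ℝ),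
          ∑ j ∈ Finset.univ.filter (fun j => h i (x j) = t), lam j = 0 := by
  rw [forall_exists_sum_comp_iff_injective_marginals, exists_fin_cycle_iff_exists_finsupp,
    injective_iff_map_eq_zero]
  simp only [funext_iff, marginals_apply, Pi.zero_apply, not_exists, not_and]
  exact forall_congr' fun _ => not_imp_not.symm
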